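/- Let Ω(x,y) = (∑ᵢ(xᵢ-yᵢ)²)^(-(n-2)/2) for x, y ∈ ℝⁿ with x ≠ y. For every multi-index α = (i₁,…,iₙ), the function x ↦ ∂^α_y Ω(x,y)|_{y=y₀} evaluated at y₀ = (1,0,…,0) has Taylor coefficient at x = 0 of the monomial x₁^{i₁}⋯xₙ^{iₙ} equal to a nonzero real number (depending on α and n). -/

import Mathlib

/-- Iterated partial derivative `∂^α = ∂^{α 0}_{x₀} ⋯ ∂^{α (n-1)}_{x_{n-1}}` of a function
on `ℝⁿ = Fin n → ℝ`, for a multi-index `α`. -/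
noncomputable def iterPderiv (n : ℕ) (α : Fin n → ℕ) (f : (Fin n → ℝ) → ℝ) :
    (Fin n → ℝ) → ℝ :=
  (List.finRange n).foldr
    (fun i g =>
      (fun h : (Fin n → ℝ) → ℝ => fun x => fderiv ℝ h x (Pi.single i 1))^[α i] g) f

/-!
Write `m = (n - 2) / 2 > 0` and `K v = |v| ^ (-2m)`. As `Ω x y = K (y - x)`, we have
`∂^α_x ∂^α_y Ω (0, e₀) = (-1)^|α| ∂^{2α} K (e₀)`. Every partial derivative of `K` is a finite sum
of terms `c · v^e · |v| ^ (-2(m + d))`, on which `∂ᵢ` acts by an explicit rule, and for which the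
partial derivatives visibly commute, so they may be taken in any order. Take first the derivatives in the directions other than
`e₀`, all of even order. On the axis `ℝ e₀` only the terms with `e = 0` survive; they all have the
same `d` (as `2d = |e| + #derivatives` throughout), their coefficients all have the sign `(-1)^d`,
and one of them is nonzero. So on the axis the result is `C t ^ (-2(m + d))` with `C ≠ 0`, and the
remaining derivatives along `e₀` multiply `C` by a nonzero falling factorial.
-/

open Finset Function

namespace NewtonianKernel

variable {n : ℕ}

/-- `⟨c, e, d⟩` stands for `v ↦ c * v ^ e * |v| ^ (-2 * (m + d))`, the exponent `m` being fixed
by the context. -/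
structure Term (n : ℕ) where
  coeff : ℝ
  exp : Fin n → ℕ
  shift : ℕ

namespace Term

def kernel : Term n := ⟨1, 0, 0⟩

noncomputable def eval (m : ℝ) (τ : Term n) (v : Fin n → ℝ) : ℝ :=
  τ.coeff * (∏ i, v i ^ τ.exp i) * (∑ i, v i ^ 2) ^ (-m - τ.shift)

/-- When `τ.exp i = 0` the first term has coefficient `0`, so the truncated `τ.exp i - 1` is
harmless. -/
def pderiv (m : ℝ) (i : Fin n) (τ : Term n) : List (Term n) :=
  [⟨τ.coeff * τ.exp i, update τ.exp i (τ.exp i - 1), τ.shift⟩,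
   ⟨-2 * (m + τ.shift) * τ.coeff, update τ.exp i (τ.exp i + 1), τ.shift + 1⟩]

end Term

noncomputable def evalSum (m : ℝ) (L : List (Term n)) (v : Fin n → ℝ) : ℝ :=
  (L.map (·.eval m v)).sum

def pderivList (m : ℝ) (i : Fin n) (L : List (Term n)) : List (Term n) :=
  L.flatMap (Term.pderiv m i)

def pderivWord (m : ℝ) (w : List (Fin n)) (L : List (Term n)) : List (Term n) :=
  w.foldr (pderivList m) L

def wordOf (α : Fin n → ℕ) : List (Fin n) :=
  (List.finRange n).flatMap fun i => List.replicate (α i) i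

def iterPderivList (m : ℝ) (α : Fin n → ℕ) (L : List (Term n)) : List (Term n) :=
  (List.finRange n).foldr (fun i L => (pderivList m i)^[α i] L) L

section Eval

variable {m : ℝ}

@[simp] lemma evalSum_cons (τ : Term n) (L : List (Term n)) (v : Fin n → ℝ) :
    evalSum m (τ :: L) v = τ.eval m v + evalSum m L v := List.sum_cons

lemma evalSum_append (L₁ L₂ : List (Term n)) (v : Fin n → ℝ) :
    evalSum m (L₁ ++ L₂) v = evalSum m L₁ v + evalSum m L₂ v := by
  simp [evalSum]

lemma evalSum_flatMap (L : List (Term n)) (g : Term n → List (Term n)) (v : Fin n → ℝ) :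
    evalSum m (L.flatMap g) v = (L.map fun τ => evalSum m (g τ) v).sum := by
  induction L with
  | nil => rfl
  | cons τ L ih => simp [List.flatMap_cons, evalSum_append, ih]

lemma evalSum_pderivList (i : Fin n) (L : List (Term n)) (v : Fin n → ℝ) :
    evalSum m (pderivList m i L) v = (L.map fun τ => evalSum m (τ.pderiv m i) v).sum :=
  evalSum_flatMap L _ v

lemma sum_sq_ne_zero {v : Fin n → ℝ} (hv : v ≠ 0) : ∑ i, v i ^ 2 ≠ 0 := by
  rw [Ne, Fintype.sum_eq_zero_iff_of_nonneg fun i => sq_nonneg (v i)]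
  exact fun h => hv (funext fun i => pow_eq_zero_iff two_ne_zero |>.mp (congrFun h i))

lemma Term.differentiableAt_eval (τ : Term n) {v : Fin n → ℝ} (hv : v ≠ 0) :
    DifferentiableAt ℝ (τ.eval m) v := by
  unfold Term.eval
  have := sum_sq_ne_zero hv
  fun_prop (disch := assumption)

lemma differentiableAt_evalSum (L : List (Term n)) {v : Fin n → ℝ} (hv : v ≠ 0) :
    DifferentiableAt ℝ (evalSum m L) v := by
  induction L with
  | nil => exact differentiableAt_const 0
  | cons τ L ih => exact (τ.differentiableAt_eval hv).add ih

lemma prod_update_pow_update (v : Fin n → ℝ) (e : Fin n → ℕ) (i : Fin n) (t : ℝ) (k : ℕ) :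
    ∏ j, update v i t j ^ update e i k j = t ^ k * ∏ j ∈ univ \ {i}, v j ^ e j := by
  simp_rw [apply_update₂ (fun _ (x : ℝ) (k : ℕ) => x ^ k)]
  exact prod_update_of_mem (mem_univ i) _ _

lemma sum_update_sq (v : Fin n → ℝ) (i : Fin n) (t : ℝ) :
    ∑ j, update v i t j ^ 2 = t ^ 2 + ∑ j ∈ univ \ {i}, v j ^ 2 := by
  have h (j : Fin n) : update v i t j ^ 2 = update (fun j => v j ^ 2) i (t ^ 2) j :=
    apply_update (fun _ (x : ℝ) => x ^ 2) v i t j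
  simp_rw [h]
  exact sum_update_of_mem (mem_univ i) _ _

lemma prod_update_pow (v : Fin n → ℝ) (e : Fin n → ℕ) (i : Fin n) (t : ℝ) :
    ∏ j, update v i t j ^ e j = t ^ e i * ∏ j ∈ univ \ {i}, v j ^ e j := by
  simpa using prod_update_pow_update v e i t (e i)

lemma Term.hasDerivAt_eval_update (τ : Term n) {v : Fin n → ℝ} (hv : v ≠ 0) (i : Fin n) :
    HasDerivAt (fun t => τ.eval m (update v i t)) (evalSum m (τ.pderiv m i) v) (v i) := by
  obtain ⟨c, e, d⟩ := τ
  set P := ∏ j ∈ univ \ {i}, v j ^ e j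
  set Q := ∑ j ∈ univ \ {i}, v j ^ 2
  have hS : ∑ j, v j ^ 2 = v i ^ 2 + Q := by
    rw [← sum_update_sq, update_eq_self]
  have hline : (fun t => Term.eval m ⟨c, e, d⟩ (update v i t)) =
      fun t => c * (t ^ e i * P) * (t ^ 2 + Q) ^ (-m - d) := by
    funext t
    simp only [Term.eval, prod_update_pow, sum_update_sq, P, Q]
  have hpow := (hasDerivAt_pow (e i) (v i)).mul_const P
  have hrpow := ((hasDerivAt_pow 2 (v i)).add_const Q).rpow_const (p := -m - d)
    (Or.inl (hS ▸ sum_sq_ne_zero hv))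
  rw [hline]
  refine ((hpow.const_mul c).mul hrpow).congr_deriv ?_
  have hP (k : ℕ) : ∏ j, v j ^ update e i k j = v i ^ k * P := by
    rw [← prod_update_pow_update, update_eq_self]
  simp only [Term.pderiv, evalSum, Term.eval, List.map_cons, List.map_nil, List.sum_cons,
    List.sum_nil, hP, hS]
  have hexp : -m - ((d + 1 : ℕ) : ℝ) = -m - d - 1 := by push_cast; ring
  rw [hexp, pow_succ _ (e i), show 2 - 1 = 1 from rfl, pow_one]
  ring

lemma hasDerivAt_evalSum_update (L : List (Term n)) {v : Fin n → ℝ} (hv : v ≠ 0) (i : Fin n) :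
    HasDerivAt (fun t => evalSum m L (update v i t)) (evalSum m (pderivList m i L) v) (v i) := by
  induction L with
  | nil => exact hasDerivAt_const _ _
  | cons τ L ih =>
    rw [pderivList, List.flatMap_cons, evalSum_append]
    exact (τ.hasDerivAt_eval_update hv i).add ih

lemma fderiv_evalSum_apply_single (L : List (Term n)) {v : Fin n → ℝ} (hv : v ≠ 0) (i : Fin n) :
    fderiv ℝ (evalSum m L) v (Pi.single i 1) = evalSum m (pderivList m i L) v := by
  have hd : HasFDerivAt (evalSum m L) (fderiv ℝ (evalSum m L) v) (update v i (v i)) := by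
    rw [update_eq_self]
    exact (differentiableAt_evalSum L hv).hasFDerivAt
  exact (hd.comp_hasDerivAt (v i) (hasDerivAt_update v i (v i))).unique
    (hasDerivAt_evalSum_update L hv i)

end Eval

section Representation

variable {m : ℝ} {f : (Fin n → ℝ) → ℝ} {L : List (Term n)} {s a : ℝ} {c : Fin n → ℝ}

lemma fderiv_apply_single_eq_evalSum (h : ∀ z, a • z + c ≠ 0 → f z = s * evalSum m L (a • z + c))
    (i : Fin n) {z : Fin n → ℝ} (hz : a • z + c ≠ 0) :
    fderiv ℝ f z (Pi.single i 1) = s * a * evalSum m (pderivList m i L) (a • z + c) := by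
  have hopen : IsOpen {z : Fin n → ℝ | a • z + c ≠ 0} :=
    isOpen_ne_fun (by fun_prop) continuous_const
  have hf : f =ᶠ[nhds z] fun z => s * evalSum m L (a • z + c) :=
    Filter.eventuallyEq_of_mem (hopen.mem_nhds hz) h
  have haff : HasFDerivAt (fun z : Fin n → ℝ => a • z + c) (a • ContinuousLinearMap.id ℝ _) z :=
    ((hasFDerivAt_id z).const_smul a).add_const c
  have hcomp : HasFDerivAt (fun z => s * evalSum m L (a • z + c))
      (s • (fderiv ℝ (evalSum m L) (a • z + c)).comp (a • ContinuousLinearMap.id ℝ _)) z :=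
    ((differentiableAt_evalSum L hz).hasFDerivAt.comp z haff).const_mul s
  rw [hf.fderiv_eq, hcomp.fderiv]
  simp [fderiv_evalSum_apply_single L hz i]
  ring

lemma iterate_fderiv_apply_single_eq_evalSum
    (h : ∀ z, a • z + c ≠ 0 → f z = s * evalSum m L (a • z + c)) (i : Fin n) (k : ℕ)
    {z : Fin n → ℝ} (hz : a • z + c ≠ 0) :
    (fun g : (Fin n → ℝ) → ℝ => fun x => fderiv ℝ g x (Pi.single i 1))^[k] f z =
      s * a ^ k * evalSum m ((pderivList m i)^[k] L) (a • z + c) := by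
  induction k generalizing z with
  | zero => simpa using h z hz
  | succ k ih =>
    simp only [iterate_succ_apply']
    rw [fderiv_apply_single_eq_evalSum (fun z hz => ih hz) i hz, pow_succ, mul_assoc s]

lemma foldr_iterate_fderiv_apply_single_eq_evalSum
    (h : ∀ z, a • z + c ≠ 0 → f z = s * evalSum m L (a • z + c)) (α : Fin n → ℕ)
    (l : List (Fin n)) {z : Fin n → ℝ} (hz : a • z + c ≠ 0) :
    l.foldr (fun i g =>
        (fun g : (Fin n → ℝ) → ℝ => fun x => fderiv ℝ g x (Pi.single i 1))^[α i] g) f z =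
      s * a ^ (l.map α).sum *
        evalSum m (l.foldr (fun i L => (pderivList m i)^[α i] L) L) (a • z + c) := by
  induction l generalizing z with
  | nil => simpa using h z hz
  | cons i l ih =>
    rw [List.foldr_cons, List.foldr_cons,
      iterate_fderiv_apply_single_eq_evalSum (fun z hz => ih hz) i _ hz, List.map_cons,
      List.sum_cons, pow_add]
    ring

lemma iterPderiv_eq_evalSum
    (h : ∀ z, a • z + c ≠ 0 → f z = s * evalSum m L (a • z + c)) (α : Fin n → ℕ)
    {z : Fin n → ℝ} (hz : a • z + c ≠ 0) :
    iterPderiv n α f z = s * a ^ (∑ i, α i) * evalSum m (iterPderivList m α L) (a • z + c) := by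
  rw [Fin.sum_univ_def]
  exact foldr_iterate_fderiv_apply_single_eq_evalSum h α _ hz

end Representation

section Word

variable {m : ℝ}

lemma pderivWord_append (w₁ w₂ : List (Fin n)) (L : List (Term n)) :
    pderivWord m (w₁ ++ w₂) L = pderivWord m w₁ (pderivWord m w₂ L) :=
  List.foldr_append

lemma pderivWord_replicate (k : ℕ) (i : Fin n) (L : List (Term n)) :
    pderivWord m (List.replicate k i) L = (pderivList m i)^[k] L := by
  induction k with
  | zero => rfl
  | succ k ih => rw [List.replicate_succ, pderivWord, List.foldr_cons, ← pderivWord, ih,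
      iterate_succ_apply']

lemma iterPderivList_eq_pderivWord (α : Fin n → ℕ) (L : List (Term n)) :
    iterPderivList m α L = pderivWord m (wordOf α) L := by
  unfold iterPderivList wordOf
  induction List.finRange n with
  | nil => rfl
  | cons i l ih => rw [List.foldr_cons, List.flatMap_cons, pderivWord_append,
      pderivWord_replicate, ih]

lemma count_wordOf (α : Fin n → ℕ) (j : Fin n) : (wordOf α).count j = α j := by
  simp [wordOf, List.count_flatMap, List.count_replicate, ← Fin.sum_univ_def]

lemma Term.evalSum_pderivList_pderiv_comm (τ : Term n) (i j : Fin n) (v : Fin n → ℝ) :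
    evalSum m (pderivList m i (τ.pderiv m j)) v = evalSum m (pderivList m j (τ.pderiv m i)) v := by
  rcases eq_or_ne i j with rfl | hij
  · rfl
  obtain ⟨c, e, d⟩ := τ
  simp only [pderivList, Term.pderiv, List.flatMap_cons, List.flatMap_nil, List.append_nil,
    update_of_ne hij, update_of_ne hij.symm, List.cons_append, List.nil_append]
  simp only [update_comm hij.symm _ _ e]
  simp only [evalSum, Term.eval, List.map_cons, List.map_nil, List.sum_cons, List.sum_nil]
  push_cast
  ring

lemma evalSum_pderivList_comm (i j : Fin n) (L : List (Term n)) (v : Fin n → ℝ) :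
    evalSum m (pderivList m i (pderivList m j L)) v =
      evalSum m (pderivList m j (pderivList m i L)) v := by
  simp only [pderivList, List.flatMap_assoc, evalSum_flatMap]
  refine congrArg List.sum (List.map_congr_left fun τ _ => ?_)
  simpa only [evalSum_pderivList] using τ.evalSum_pderivList_pderiv_comm i j v

lemma evalSum_pderivList_congr {L₁ L₂ : List (Term n)}
    (h : ∀ v, v ≠ 0 → evalSum m L₁ v = evalSum m L₂ v) (i : Fin n) {v : Fin n → ℝ}
    (hv : v ≠ 0) : evalSum m (pderivList m i L₁) v = evalSum m (pderivList m i L₂) v := by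
  have hL : evalSum m L₁ =ᶠ[nhds v] evalSum m L₂ :=
    Filter.eventuallyEq_of_mem (isOpen_compl_singleton.mem_nhds hv) h
  rw [← fderiv_evalSum_apply_single L₁ hv, ← fderiv_evalSum_apply_single L₂ hv, hL.fderiv_eq]

lemma evalSum_pderivWord_perm {w₁ w₂ : List (Fin n)} (hw : w₁.Perm w₂) (L : List (Term n))
    {v : Fin n → ℝ} (hv : v ≠ 0) :
    evalSum m (pderivWord m w₁ L) v = evalSum m (pderivWord m w₂ L) v := by
  induction hw generalizing v with
  | nil => rfl
  | cons i _ ih => exact evalSum_pderivList_congr (fun v hv => ih hv) i hv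
  | swap i j w => exact evalSum_pderivList_comm j i _ v
  | trans _ _ ih₁ ih₂ => exact (ih₁ hv).trans (ih₂ hv)

end Word

def Balanced (K : ℕ) (L : List (Term n)) : Prop :=
  ∀ τ ∈ L, τ.coeff ≠ 0 → 2 * τ.shift = ∑ i, τ.exp i + K

def SignCoherent (L : List (Term n)) : Prop :=
  ∀ τ ∈ L, 0 ≤ (-1) ^ τ.shift * τ.coeff

def HasRadialTerm (L : List (Term n)) : Prop :=
  ∃ τ ∈ L, τ.coeff ≠ 0 ∧ τ.exp = 0

section Invariants

variable {m : ℝ}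

lemma mem_pderivList {i : Fin n} {L : List (Term n)} {σ : Term n} :
    σ ∈ pderivList m i L ↔ ∃ τ ∈ L, σ ∈ τ.pderiv m i :=
  List.mem_flatMap

lemma exp_eq_zero_of_mem_pderivWord {i₀ : Fin n} {L : List (Term n)}
    (hL : ∀ τ ∈ L, τ.exp i₀ = 0) {w : List (Fin n)} (hw : i₀ ∉ w) :
    ∀ σ ∈ pderivWord m w L, σ.exp i₀ = 0 := by
  induction w with
  | nil => exact hL
  | cons i w ih =>
    rw [List.mem_cons, not_or] at hw
    intro σ hσ
    obtain ⟨τ, hτ, hσ⟩ := mem_pderivList.mp hσ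
    simp only [Term.pderiv, List.mem_cons, List.not_mem_nil, or_false] at hσ
    rcases hσ with rfl | rfl <;> simpa [update_of_ne hw.1] using ih hw.2 τ hτ

lemma sum_update_add_self (e : Fin n → ℕ) (i : Fin n) (k : ℕ) :
    ∑ j, update e i k j + e i = ∑ j, e j + k := by
  rw [sum_update_of_mem (mem_univ i), ← add_sum_erase univ e (mem_univ i),
    sdiff_singleton_eq_erase]
  ring

lemma Balanced.pderivList {K : ℕ} {L : List (Term n)} (h : Balanced K L) (i : Fin n) :
    Balanced (K + 1) (pderivList m i L) := by
  intro σ hσ hc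
  obtain ⟨τ, hτ, hσ⟩ := mem_pderivList.mp hσ
  simp only [Term.pderiv, List.mem_cons, List.not_mem_nil, or_false] at hσ
  rcases hσ with rfl | rfl
  · have hτe : τ.exp i ≠ 0 := by exact_mod_cast right_ne_zero_of_mul hc
    have := h τ hτ (left_ne_zero_of_mul hc)
    have := sum_update_add_self τ.exp i (τ.exp i - 1)
    dsimp only
    omega
  · have := h τ hτ (right_ne_zero_of_mul hc)
    have := sum_update_add_self τ.exp i (τ.exp i + 1)
    dsimp only
    omega

lemma Balanced.pderivWord {K : ℕ} {L : List (Term n)} (h : Balanced K L) (w : List (Fin n)) :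
    Balanced (K + w.length) (pderivWord m w L) := by
  induction w with
  | nil => exact h
  | cons i w ih =>
    rw [List.length_cons, ← Nat.add_assoc]
    exact ih.pderivList i

lemma SignCoherent.pderivList (hm : 0 ≤ m) {L : List (Term n)} (h : SignCoherent L)
    (i : Fin n) : SignCoherent (pderivList m i L) := by
  intro σ hσ
  obtain ⟨τ, hτ, hσ⟩ := mem_pderivList.mp hσ
  simp only [Term.pderiv, List.mem_cons, List.not_mem_nil, or_false] at hσ
  have := h τ hτ
  rcases hσ with rfl | rfl
  · calc (0 : ℝ) ≤ τ.exp i * ((-1) ^ τ.shift * τ.coeff) := by positivity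
      _ = _ := by ring
  · calc (0 : ℝ) ≤ 2 * (m + τ.shift) * ((-1) ^ τ.shift * τ.coeff) := by positivity
      _ = _ := by ring

lemma SignCoherent.pderivWord (hm : 0 ≤ m) {L : List (Term n)} (h : SignCoherent L)
    (w : List (Fin n)) : SignCoherent (pderivWord m w L) := by
  induction w with
  | nil => exact h
  | cons i w ih => exact ih.pderivList hm i

lemma HasRadialTerm.pderivList_pderivList (hm : 0 < m) {L : List (Term n)}
    (h : HasRadialTerm L) (i : Fin n) : HasRadialTerm (pderivList m i (pderivList m i L)) := by
  obtain ⟨τ, hτ, hc, he⟩ := h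
  set σ : Term n := ⟨-2 * (m + τ.shift) * τ.coeff, update τ.exp i 1, τ.shift + 1⟩
  have hσ : σ ∈ pderivList m i L := mem_pderivList.mpr ⟨τ, hτ, by simp [Term.pderiv, σ, he]⟩
  refine ⟨⟨σ.coeff * 1, update σ.exp i 0, σ.shift⟩,
    mem_pderivList.mpr ⟨σ, hσ, by simp [Term.pderiv, σ]⟩, ?_, by simp [σ, he]⟩
  have : m + τ.shift ≠ 0 := by positivity
  simp [σ, hc, this]

lemma HasRadialTerm.iterPderivList_of_even (hm : 0 < m) {L : List (Term n)}
    (h : HasRadialTerm L) {β : Fin n → ℕ} (hβ : ∀ i, Even (β i)) :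
    HasRadialTerm (iterPderivList m β L) := by
  unfold iterPderivList
  induction List.finRange n with
  | nil => exact h
  | cons i l ih =>
    obtain ⟨k, hk⟩ := hβ i
    rw [List.foldr_cons, hk, ← two_mul, iterate_mul]
    clear hk
    induction k with
    | zero => exact ih
    | succ k ihk => rw [iterate_succ_apply']; exact ihk.pderivList_pderivList hm i

end Invariants

section Axis

variable {m : ℝ} (i₀ : Fin n)

lemma Term.eval_single (τ : Term n) (h : τ.exp i₀ = 0) (t : ℝ) :
    τ.eval m (Pi.single i₀ t) =
      if τ.exp = 0 then τ.coeff * (t ^ 2) ^ (-m - τ.shift) else 0 := by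
  have hsum : ∑ j, Pi.single (M := fun _ => ℝ) i₀ t j ^ 2 = t ^ 2 := by
    simp [Pi.single_apply, apply_ite (· ^ 2)]
  have hprod :
      ∏ j, Pi.single (M := fun _ => ℝ) i₀ t j ^ τ.exp j = if τ.exp = 0 then 1 else 0 := by
    split_ifs with he
    · simp [he]
    · obtain ⟨j, hj⟩ := Function.ne_iff.mp he
      have hji : j ≠ i₀ := by rintro rfl; exact hj h
      exact prod_eq_zero (mem_univ j) (by simpa [Pi.single_eq_of_ne hji] using hj)
  rw [Term.eval, hprod, hsum]
  split_ifs <;> ring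

lemma evalSum_single (M : List (Term n)) (h0 : ∀ τ ∈ M, τ.exp i₀ = 0) {d : ℕ}
    (hd : ∀ τ ∈ M, τ.coeff ≠ 0 → τ.exp = 0 → τ.shift = d) (t : ℝ) :
    evalSum m M (Pi.single i₀ t) = evalSum m M (Pi.single i₀ 1) * (t ^ 2) ^ (-m - d) := by
  induction M with
  | nil => exact (zero_mul _).symm
  | cons τ M ih =>
    simp only [List.forall_mem_cons] at h0 hd
    rw [evalSum_cons, evalSum_cons, add_mul, ih h0.2 hd.2, τ.eval_single i₀ h0.1,
      τ.eval_single i₀ h0.1]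
    split_ifs with he
    · rcases eq_or_ne τ.coeff 0 with hc | hc
      · simp [hc]
      · simp [hd.1 hc he]
    · simp

lemma sign_mul_evalSum_single_pos {M : List (Term n)} (hM : SignCoherent M)
    (hrad : HasRadialTerm M) (h0 : ∀ τ ∈ M, τ.exp i₀ = 0) {d : ℕ}
    (hd : ∀ τ ∈ M, τ.coeff ≠ 0 → τ.exp = 0 → τ.shift = d) :
    0 < (-1) ^ d * evalSum m M (Pi.single i₀ 1) := by
  have hterm (τ) (hτ : τ ∈ M) :
      (-1) ^ d * τ.eval m (Pi.single i₀ 1) = if τ.exp = 0 then (-1) ^ d * τ.coeff else 0 := by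
    rw [τ.eval_single i₀ (h0 τ hτ)]
    split_ifs <;> simp
  have hnonneg (τ) (hτ : τ ∈ M) : 0 ≤ (-1) ^ d * τ.eval m (Pi.single i₀ 1) := by
    rw [hterm τ hτ]
    split_ifs with he
    · rcases eq_or_ne τ.coeff 0 with hc | hc
      · simp [hc]
      · exact hd τ hτ hc he ▸ hM τ hτ
    · rfl
  obtain ⟨τ, hτ, hc, he⟩ := hrad
  have hpos : 0 < (-1) ^ d * τ.eval m (Pi.single i₀ 1) := by
    refine (hnonneg τ hτ).lt_of_ne' ?_
    rw [hterm τ hτ, if_pos he]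
    exact mul_ne_zero (pow_ne_zero _ (by norm_num)) hc
  rw [evalSum, ← List.sum_map_mul_left]
  exact hpos.trans_le (List.single_le_sum (by simpa using hnonneg) _ (List.mem_map_of_mem hτ))

lemma hasDerivAt_evalSum_single (L : List (Term n)) {t : ℝ} (ht : t ≠ 0) :
    HasDerivAt (fun t => evalSum m L (Pi.single i₀ t))
      (evalSum m (pderivList m i₀ L) (Pi.single i₀ t)) t := by
  simpa [Pi.single, update_idem] using
    hasDerivAt_evalSum_update L (v := Pi.single i₀ t) (by simpa using ht) i₀

lemma evalSum_iterate_pderivList_single (M : List (Term n)) (h0 : ∀ τ ∈ M, τ.exp i₀ = 0)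
    {d : ℕ} (hd : ∀ τ ∈ M, τ.coeff ≠ 0 → τ.exp = 0 → τ.shift = d) (k : ℕ) {t : ℝ} (ht : 0 < t) :
    evalSum m ((pderivList m i₀)^[k] M) (Pi.single i₀ t) =
      evalSum m M (Pi.single i₀ 1) * (∏ j ∈ range k, (-2 * (m + d) - j)) *
        t ^ (-2 * (m + d) - k) := by
  induction k generalizing t with
  | zero =>
    rw [iterate_zero_apply, evalSum_single i₀ M h0 hd, ← Real.rpow_natCast,
      ← Real.rpow_mul ht.le]
    push_cast
    ring_nf
  | succ k ih =>
    set C := evalSum m M (Pi.single i₀ 1) * ∏ j ∈ range k, (-2 * (m + d) - j)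
    have hslice : (fun t => evalSum m ((pderivList m i₀)^[k] M) (Pi.single i₀ t)) =ᶠ[nhds t]
        fun t => C * t ^ (-2 * (m + d) - k) :=
      Filter.eventuallyEq_of_mem (Ioi_mem_nhds ht) fun t ht => ih ht
    have hderiv :=
      ((Real.hasDerivAt_rpow_const (Or.inl ht.ne')).const_mul C).congr_of_eventuallyEq hslice
    have hexp : -2 * (m + d) - ((k + 1 : ℕ) : ℝ) = -2 * (m + d) - k - 1 := by push_cast; ring
    rw [iterate_succ_apply', (hasDerivAt_evalSum_single i₀ _ ht.ne').unique hderiv,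
      prod_range_succ, hexp]
    ring

end Axis

lemma evalSum_iterate_pderivList_pderivWord_kernel_single_ne_zero {m : ℝ} (hm : 0 < m)
    {γ : Fin n → ℕ} (hγ : ∀ i, Even (γ i)) {i₀ : Fin n} (hγ₀ : γ i₀ = 0) (k : ℕ) :
    evalSum m ((pderivList m i₀)^[k] (pderivWord m (wordOf γ) [Term.kernel])) (Pi.single i₀ 1)
      ≠ 0 := by
  set M := pderivWord m (wordOf γ) [Term.kernel]
  set d := (wordOf γ).length / 2
  have hexp : ∀ τ ∈ M, τ.exp i₀ = 0 := by
    refine exp_eq_zero_of_mem_pderivWord (by simp [Term.kernel]) ?_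
    rw [← List.count_eq_zero, count_wordOf, hγ₀]
  have hshift : ∀ τ ∈ M, τ.coeff ≠ 0 → τ.exp = 0 → τ.shift = d := by
    have hbal : Balanced 0 [Term.kernel (n := n)] := by simp [Balanced, Term.kernel]
    intro τ hτ hc he
    have := hbal.pderivWord (m := m) (wordOf γ) τ hτ hc
    simp only [he, Pi.zero_apply, sum_const_zero, zero_add] at this
    omega
  have hsign : SignCoherent M := by
    have : SignCoherent [Term.kernel (n := n)] := by simp [SignCoherent, Term.kernel]
    exact this.pderivWord hm.le _
  have hrad : HasRadialTerm M := by
    have : HasRadialTerm [Term.kernel (n := n)] := ⟨_, List.mem_singleton_self _, one_ne_zero, rfl⟩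
    simpa only [M, iterPderivList_eq_pderivWord] using this.iterPderivList_of_even hm hγ
  have hC := sign_mul_evalSum_single_pos (m := m) i₀ hsign hrad hexp hshift
  rw [evalSum_iterate_pderivList_single i₀ M hexp hshift _ one_pos, Real.one_rpow, mul_one]
  refine mul_ne_zero (right_ne_zero_of_mul hC.ne') (prod_ne_zero_iff.mpr fun j _ => ?_)
  have : 0 < m + d := by positivity
  linarith

lemma evalSum_pderivWord_kernel_single_ne_zero {m : ℝ} (hm : 0 < m) {β : Fin n → ℕ}
    (hβ : ∀ i, Even (β i)) (i₀ : Fin n) :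
    evalSum m (pderivWord m (wordOf β) [Term.kernel]) (Pi.single i₀ 1) ≠ 0 := by
  set γ := update β i₀ 0
  have hperm : (wordOf β).Perm (List.replicate (β i₀) i₀ ++ wordOf γ) := by
    rw [List.perm_iff_count]
    intro j
    rcases eq_or_ne j i₀ with rfl | hj
    · simp [count_wordOf, γ]
    · simp [count_wordOf, γ, hj, List.count_replicate, Ne.symm hj]
  have hγ (i : Fin n) : Even (γ i) := by
    rcases eq_or_ne i i₀ with rfl | hi
    · simp [γ]
    · simpa [γ, hi] using hβ i
  rw [evalSum_pderivWord_perm hperm _ (by simp), pderivWord_append, pderivWord_replicate]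
  exact evalSum_iterate_pderivList_pderivWord_kernel_single_ne_zero hm hγ (by simp [γ]) _

lemma evalSum_iterPderivList_iterPderivList_kernel_single_ne_zero {m : ℝ} (hm : 0 < m)
    (α : Fin n → ℕ) (i₀ : Fin n) :
    evalSum m (iterPderivList m α (iterPderivList m α [Term.kernel])) (Pi.single i₀ 1) ≠ 0 := by
  have hperm : (wordOf α ++ wordOf α).Perm (wordOf (α + α)) := by
    rw [List.perm_iff_count]
    intro j
    simp [List.count_append, count_wordOf]
  rw [iterPderivList_eq_pderivWord, iterPderivList_eq_pderivWord, ← pderivWord_append,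
    evalSum_pderivWord_perm hperm _ (by simp)]
  exact evalSum_pderivWord_kernel_single_ne_zero hm (fun i => ⟨α i, rfl⟩) i₀

end NewtonianKernel

open NewtonianKernel in
/-- Lemma 1: for `Ω(x,y) = (∑ᵢ (xᵢ-yᵢ)²)^{-(n-2)/2}` and any multi-index `α`,
the Taylor coefficient at `x = 0` of the monomial `x^α` of the function
`x ↦ ∂^α_y Ω(x,y)|_{y = y₀}`, `y₀ = (1,0,…,0)`, is nonzero; equivalently (the coefficient
being `∂^α_x(⋅)(0)/α!`), the mixed derivative `∂^α_x ∂^α_y Ω` at `x = 0`, `y = y₀` is nonzero. -/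
theorem newtonian_kernel_derivatives_generate (n : ℕ) (hn : 3 ≤ n) (α : Fin n → ℕ) :
    iterPderiv n α
      (fun x : Fin n → ℝ =>
        iterPderiv n α
          (fun y : Fin n → ℝ =>
            (∑ i : Fin n, (x i - y i) ^ 2) ^ (-(((n : ℝ) - 2) / 2)))
          (Pi.single (⟨0, by omega⟩ : Fin n) 1))
      0 ≠ 0 := by
  set m : ℝ := ((n : ℝ) - 2) / 2
  have hm : 0 < m := by
    have : (3 : ℝ) ≤ n := by exact_mod_cast hn
    simp only [m]
    linarith
  set e₀ : Fin n → ℝ := Pi.single ⟨0, by omega⟩ 1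
  have hΩ (x y : Fin n → ℝ) (_ : (1 : ℝ) • y + -x ≠ 0) :
      (∑ i, (x i - y i) ^ 2) ^ (-m) = 1 * evalSum m [Term.kernel] ((1 : ℝ) • y + -x) := by
    simp only [evalSum, Term.eval, Term.kernel, List.map_cons, List.map_nil, List.sum_cons,
      List.sum_nil, Pi.zero_apply, pow_zero, prod_const_one, one_mul, CharP.cast_eq_zero, sub_zero,
      add_zero, Pi.add_apply, Pi.neg_apply, one_smul]
    congr 1
    exact sum_congr rfl fun i _ => by ring
  have hinner (x : Fin n → ℝ) (hx : (-1 : ℝ) • x + e₀ ≠ 0) :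
      iterPderiv n α (fun y => (∑ i, (x i - y i) ^ 2) ^ (-m)) e₀ =
        1 * evalSum m (iterPderivList m α [Term.kernel]) ((-1 : ℝ) • x + e₀) := by
    rw [neg_one_smul, add_comm] at *
    rw [iterPderiv_eq_evalSum (hΩ x) α (by rwa [one_smul]), one_pow, mul_one, one_smul]
  rw [iterPderiv_eq_evalSum hinner α (by simp [e₀]), smul_zero, zero_add]
  exact mul_ne_zero (by simp) (evalSum_iterPderivList_iterPderivList_kernel_single_ne_zero hm α _)
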